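/- arXiv:1108.2484 — 4 statements merged into one kernel-verified Lean document; each statement's English description precedes it below -/
import Mathlib

section
/- Let X be a finite set, E*₀,...,E*_D diagonal idempotents in Mat_X(ℝ) summing to I with E*ᵢE*ⱼ = δᵢⱼE*ᵢ, and A ∈ Mat_X(ℝ) with E*ᵢ A E*ₕ = 0 for |i−h| ≠ 1. Let L = ∑_{i=1}^D E*_{i−1} A E*ᵢ and R = ∑_{i=0}^{D−1} E*_{i+1} A E*ᵢ, and let A* = ∑_{i=0}^D θ*ᵢ E*ᵢ for real scalars θ*₀,...,θ*_D. Then for 1 ≤ i ≤ D: E*_{i−1} A² A* A E*ᵢ = θ*_{i−1} R L² E*ᵢ + θ*_{i−1} L R L E*ᵢ + θ*_{i+1} L² R E*ᵢ, and E*_{i−1} A A* A² E*ᵢ = θ*_{i−2} R L² E*ᵢ + θ*ᵢ L R L E*ᵢ + θ*ᵢ L² R E*ᵢ (with θ*_{−1}, θ*_{D+1} arbitrary since the corresponding terms vanish). -/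
/-!
The idempotents `E j` grade the algebra: say `w` has degree `d` if `w * E j = E (j + d) * w`.
Tridiagonality of `A` gives `A = L + R` with `L` of degree `-1` and `R` of degree `1`, while `A*`
acts on the image of `E j` as the scalar `θ*_j`. Expanding `A² A* A` and `A A* A²` into words in
`L` and `R`, the corner `E (i - 1) * _ * E i` keeps exactly the words of degree `-1`
(`R L²`, `L R L`, `L² R`), and in each of them `A*` contributes `θ*` at the level reached by the
letters to its right.
-/

section Grading

variable {α : Type*} [Ring α] {E : ℤ → α}

theorem eq_zero_of_notMem_of_sum_eq_one {s : Finset ℤ}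
    (hEorth : ∀ i j, E i * E j = if i = j then E i else 0) (hEsum : ∑ j ∈ s, E j = 1)
    {m : ℤ} (hm : m ∉ s) : E m = 0 := by
  rw [← mul_one (E m), ← hEsum, Finset.mul_sum]
  refine Finset.sum_eq_zero fun k hk => ?_
  rw [hEorth, if_neg (ne_of_mem_of_not_mem hk hm).symm]

theorem eq_of_forall_mul_eq {s : Finset ℤ} (hEsum : ∑ j ∈ s, E j = 1) {x y : α}
    (h : ∀ j, x * E j = y * E j) : x = y := by
  rw [← mul_one x, ← mul_one y, ← hEsum, Finset.mul_sum, Finset.mul_sum]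
  exact Finset.sum_congr rfl fun j _ => h j

theorem sum_mul_eq_of_orthogonal {s : Finset ℤ} {F : ℤ → α}
    (hF : ∀ i j, i ≠ j → F i * E j = 0) (hout : ∀ j ∉ s, F j * E j = 0) (j : ℤ) :
    (∑ i ∈ s, F i) * E j = F j * E j := by
  rw [Finset.sum_mul]
  exact Finset.sum_eq_single j (fun i _ hij => hF i j hij) (hout j)

theorem sum_corner_mul_eq (hEorth : ∀ i j, E i * E j = if i = j then E i else 0) {s : Finset ℤ}
    (c : ℤ → ℤ) (A : α) (hout : ∀ j ∉ s, E (c j) * A * E j = 0) (j : ℤ) :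
    (∑ i ∈ s, E (c i) * A * E i) * E j = E (c j) * A * E j := by
  rw [sum_mul_eq_of_orthogonal (fun i j h => by rw [mul_assoc, hEorth, if_neg h, mul_zero])
    (fun j hj => by rw [hout j hj, zero_mul]), mul_assoc, hEorth, if_pos rfl]

theorem sum_smul_mul_eq {K : Type*} [CommRing K] [Algebra K α] {s : Finset ℤ}
    (hEorth : ∀ i j, E i * E j = if i = j then E i else 0) (hEsum : ∑ j ∈ s, E j = 1)
    (θ : ℤ → K) (j : ℤ) : (∑ i ∈ s, θ i • E i) * E j = θ j • E j := by
  rw [sum_mul_eq_of_orthogonal (fun i j h => by rw [smul_mul_assoc, hEorth, if_neg h, smul_zero])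
    (fun j hj => by rw [eq_zero_of_notMem_of_sum_eq_one hEorth hEsum hj, smul_zero, zero_mul]),
    smul_mul_assoc, hEorth, if_pos rfl]

theorem mul_eq_add_of_tridiagonal {s : Finset ℤ}
    (hEorth : ∀ i j, E i * E j = if i = j then E i else 0) (hEsum : ∑ j ∈ s, E j = 1)
    {A : α} (hA : ∀ i h : ℤ, |i - h| ≠ 1 → E i * A * E h = 0) (j : ℤ) :
    A * E j = E (j - 1) * A * E j + E (j + 1) * A * E j := by
  have hE {m} := eq_zero_of_notMem_of_sum_eq_one (m := m) hEorth hEsum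
  conv_lhs => rw [← one_mul A, ← hEsum, Finset.sum_mul, Finset.sum_mul]
  exact Finset.sum_eq_add _ _ (by omega)
    (fun k _ hk => hA k j (by rw [Ne, abs_eq zero_le_one]; omega))
    (fun h => by rw [hE h, zero_mul, zero_mul]) (fun h => by rw [hE h, zero_mul, zero_mul])

def HasDegree (E : ℤ → α) (d : ℤ) (w : α) : Prop :=
  ∀ j, w * E j = E (j + d) * w

theorem HasDegree.mul {d e : ℤ} {w v : α} (hw : HasDegree E d w) (hv : HasDegree E e v) :
    HasDegree E (d + e) (w * v) := fun j => by
  rw [mul_assoc, hv j, ← mul_assoc, hw, mul_assoc, add_right_comm, add_assoc]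

theorem hasDegree_of_corner {s : Finset ℤ}
    (hEorth : ∀ i j, E i * E j = if i = j then E i else 0) (hEsum : ∑ j ∈ s, E j = 1)
    {d : ℤ} {w : α} (h : ∀ k j, k ≠ j + d → E k * w * E j = 0) : HasDegree E d w := by
  intro j
  have hE {m} := eq_zero_of_notMem_of_sum_eq_one (m := m) hEorth hEsum
  calc w * E j = (∑ k ∈ s, E k) * w * E j := by rw [hEsum, one_mul]
    _ = E (j + d) * w * E j := by
      rw [Finset.sum_mul, Finset.sum_mul]
      exact Finset.sum_eq_single _ (fun k _ hk => h k j hk)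
        fun hm => by rw [hE hm, zero_mul, zero_mul]
    _ = E (j + d) * w * ∑ k ∈ s, E k := by
      rw [Finset.mul_sum]
      refine (Finset.sum_eq_single j (fun k _ hk => h _ k (by omega)) fun hm => ?_).symm
      rw [hE hm, mul_zero]
    _ = E (j + d) * w := by rw [hEsum, mul_one]

theorem hasDegree_of_mul_eq {s : Finset ℤ}
    (hEorth : ∀ i j, E i * E j = if i = j then E i else 0) (hEsum : ∑ j ∈ s, E j = 1)
    {d : ℤ} {w A : α} (hw : ∀ j, w * E j = E (j + d) * A * E j) : HasDegree E d w :=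
  hasDegree_of_corner hEorth hEsum fun k j hkj => by
    rw [mul_assoc, hw, ← mul_assoc, ← mul_assoc, hEorth, if_neg hkj, zero_mul, zero_mul]

theorem HasDegree.corner (hEorth : ∀ i j, E i * E j = if i = j then E i else 0)
    {d : ℤ} {w : α} (hw : HasDegree E d w) (k j : ℤ) :
    E k * w * E j = if k = j + d then w * E j else 0 := by
  rw [mul_assoc, hw, ← mul_assoc, hEorth]
  split_ifs with hk
  · rw [hk, ← hw]
  · rw [zero_mul]

theorem HasDegree.corner_mul_diag_mul {K : Type*} [CommRing K] [Algebra K α]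
    (hEorth : ∀ i j, E i * E j = if i = j then E i else 0) {θ : ℤ → K} {S : α}
    (hS : ∀ j, S * E j = θ j • E j) {d e : ℤ} {w v : α}
    (hw : HasDegree E d w) (hv : HasDegree E e v) (k j : ℤ) :
    E k * (w * S * v) * E j = if k = j + (d + e) then θ (j + e) • (w * v * E j) else 0 := by
  have hSv : w * S * v * E j = θ (j + e) • (w * v * E j) := by
    rw [mul_assoc, hv, ← mul_assoc, mul_assoc w, hS, mul_smul_comm, smul_mul_assoc,
      mul_assoc, ← hv, mul_assoc]
  rw [mul_assoc, hSv, mul_smul_comm, ← mul_assoc, ← mul_assoc, mul_assoc _ w,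
    (hw.mul hv).corner hEorth]
  split_ifs <;> simp [mul_assoc]

end Grading

theorem stmt_13_general {X : Type*} [Fintype X] [DecidableEq X]
    (D : ℕ)
    (E : ℤ → Matrix X X ℝ)
    (hEsum : ∑ j ∈ Finset.Icc (0 : ℤ) D, E j = 1)
    (hEorth : ∀ i j : ℤ, E i * E j = if i = j then E i else 0)
    (A : Matrix X X ℝ)
    (hA : ∀ i h : ℤ, |i - h| ≠ 1 → E i * A * E h = 0)
    (L R : Matrix X X ℝ)
    (hL : L = ∑ i ∈ Finset.Icc (1 : ℤ) D, E (i - 1) * A * E i)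
    (hR : R = ∑ i ∈ Finset.Icc (0 : ℤ) (D - 1), E (i + 1) * A * E i)
    (θs : ℤ → ℝ) (As : Matrix X X ℝ)
    (hAs : As = ∑ i ∈ Finset.Icc (0 : ℤ) D, θs i • E i) :
    ∀ i : ℤ, 1 ≤ i → i ≤ D →
      (E (i - 1) * (A ^ 2 * As * A) * E i =
        θs (i - 1) • (R * L ^ 2 * E i) + θs (i - 1) • (L * R * L * E i) +
          θs (i + 1) • (L ^ 2 * R * E i)) ∧
      (E (i - 1) * (A * As * A ^ 2) * E i =
        θs (i - 2) • (R * L ^ 2 * E i) + θs i • (L * R * L * E i) +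
          θs i • (L ^ 2 * R * E i)) := by
  have hAout {k j : ℤ} (h : k ∉ Finset.Icc (0 : ℤ) D ∨ j ∉ Finset.Icc (0 : ℤ) D) :
      E k * A * E j = 0 := by
    rcases h with h | h <;> simp [eq_zero_of_notMem_of_sum_eq_one hEorth hEsum h]
  have hLE (j : ℤ) : L * E j = E (j - 1) * A * E j :=
    hL ▸ sum_corner_mul_eq hEorth _ A (fun j hj => hAout (by simp at hj ⊢; omega)) j
  have hRE (j : ℤ) : R * E j = E (j + 1) * A * E j :=
    hR ▸ sum_corner_mul_eq hEorth _ A (fun j hj => hAout (by simp at hj ⊢; omega)) j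
  have hLdeg : HasDegree E (-1) L := hasDegree_of_mul_eq hEorth hEsum hLE
  have hRdeg : HasDegree E 1 R := hasDegree_of_mul_eq hEorth hEsum hRE
  obtain rfl : A = L + R := eq_of_forall_mul_eq hEsum fun j => by
    rw [mul_eq_add_of_tridiagonal hEorth hEsum hA, add_mul, hLE, hRE]
  intro i _ _
  have corner {d e : ℤ} {w v : Matrix X X ℝ} (hw : HasDegree E d w) (hv : HasDegree E e v) :=
    hw.corner_mul_diag_mul hEorth (hAs ▸ sum_smul_mul_eq hEorth hEsum θs) hv (i - 1) i
  have hLL := hLdeg.mul hLdeg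
  have hLR := hLdeg.mul hRdeg
  have hRL := hRdeg.mul hLdeg
  have hRR := hRdeg.mul hRdeg
  constructor
  · simp (disch := omega) only [sq, add_mul, mul_add, corner hLL hLdeg, corner hLL hRdeg,
      corner hLR hLdeg, corner hLR hRdeg, corner hRL hLdeg, corner hRL hRdeg, corner hRR hLdeg,
      corner hRR hRdeg, if_pos, if_neg]
    norm_num [mul_assoc, ← sub_eq_add_neg]
  · simp (disch := omega) only [sq, add_mul, mul_add, corner hLdeg hLL, corner hRdeg hLL,
      corner hLdeg hLR, corner hRdeg hLR, corner hLdeg hRL, corner hRdeg hRL, corner hLdeg hRR,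
      corner hRdeg hRR, if_pos, if_neg]
    norm_num [mul_assoc, ← sub_eq_add_neg]

theorem stmt_13 {X : Type*} [Fintype X] [DecidableEq X]
    (D : ℕ) (hD : 3 ≤ D)
    (E : ℤ → Matrix X X ℝ)
    (hEout : ∀ j : ℤ, j < 0 ∨ (D : ℤ) < j → E j = 0)
    (hEdiag : ∀ j, (E j).IsDiag)
    (hE01 : ∀ j (x : X), E j x x = 0 ∨ E j x x = 1)
    (hEsum : ∑ j ∈ Finset.Icc (0 : ℤ) D, E j = 1)
    (hEorth : ∀ i j : ℤ, E i * E j = if i = j then E i else 0)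
    (A : Matrix X X ℝ)
    (hA : ∀ i h : ℤ, |i - h| ≠ 1 → E i * A * E h = 0)
    (L R : Matrix X X ℝ)
    (hL : L = ∑ i ∈ Finset.Icc (1 : ℤ) D, E (i - 1) * A * E i)
    (hR : R = ∑ i ∈ Finset.Icc (0 : ℤ) (D - 1), E (i + 1) * A * E i)
    (θs : ℤ → ℝ) (As : Matrix X X ℝ)
    (hAs : As = ∑ i ∈ Finset.Icc (0 : ℤ) D, θs i • E i) :
    ∀ i : ℤ, 1 ≤ i → i ≤ D →
      (E (i - 1) * (A ^ 2 * As * A) * E i =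
        θs (i - 1) • (R * L ^ 2 * E i) + θs (i - 1) • (L * R * L * E i) +
          θs (i + 1) • (L ^ 2 * R * E i)) ∧
      (E (i - 1) * (A * As * A ^ 2) * E i =
        θs (i - 2) • (R * L ^ 2 * E i) + θs i • (L * R * L * E i) +
          θs i • (L ^ 2 * R * E i)) :=
  stmt_13_general D E hEsum hEorth A hA L R hL hR θs As hAs
end

section
/- Let X be a finite set, E*₀,...,E*_D, A, L, R, A* = ∑ θ*ᵢ E*ᵢ as above, and suppose real scalars β, ϱ satisfy the relation [A, A²A* − β A A* A + A* A² − ϱ A*] = 0 (commutator), the θ*ᵢ are mutually distinct, and θ*_{i−1} ≠ θ*ᵢ for all i. Then for each 1 ≤ i ≤ D the identity ((θ*ᵢ − θ*_{i−1} + (β+1)(θ*_{i−2} − θ*_{i−1}))/(θ*ᵢ − θ*_{i−1})) RL² + (β+2) LRL + ((θ*ᵢ − θ*_{i−1} + (β+1)(θ*ᵢ − θ*_{i+1}))/(θ*ᵢ − θ*_{i−1})) L²R = ϱ L holds on E*ᵢ V, where θ*_{−1}, θ*_{D+1} are arbitrary. -/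
/-! Sandwich the relation between `E (i - 1)` and `E i`. Since `A = L + R`, where `L` lowers and
`R` raises the index of the `E j` by one, only the words `R L²`, `L R L`, `L² R` (and `L` from the
`ϱ`-term) survive, and inside such a word `As` acts as the scalar `θ k` of the level `k` it meets.
The resulting coefficients are those of the claim multiplied by `θ i - θ (i - 1) ≠ 0`. -/

open Finset

section Blocks
variable {M : Type*} [Ring M] {E : ℤ → M} {D : ℕ}

theorem block_eq_zero_of_notMem (hEout : ∀ j : ℤ, j < 0 ∨ (D : ℤ) < j → E j = 0) (A : M) {a b : ℤ}
    (h : a ∉ Icc (0 : ℤ) D ∨ b ∉ Icc (0 : ℤ) D) : E a * A * E b = 0 := by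
  simp only [mem_Icc, not_and_or, not_le] at h
  rcases h with h | h
  · rw [hEout a h, zero_mul, zero_mul]
  · rw [hEout b (by omega), mul_zero]

variable {A L R : M}

theorem lower_mul_eq_block (hE : ∀ i j : ℤ, E i * E j = if i = j then E i else 0)
    (hEout : ∀ j : ℤ, j < 0 ∨ (D : ℤ) < j → E j = 0)
    (hL : L = ∑ k ∈ Icc (1 : ℤ) D, E (k - 1) * A * E k) (j : ℤ) :
    L * E j = E (j - 1) * A * E j := by
  simp only [hL, sum_mul, mul_assoc, hE, mul_ite, mul_zero, sum_ite_eq']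
  rw [← mul_assoc, ite_eq_left_iff]
  exact fun hj => (block_eq_zero_of_notMem hEout A (by simp only [mem_Icc] at hj ⊢; omega)).symm

theorem mul_lower_eq_block (hE : ∀ i j : ℤ, E i * E j = if i = j then E i else 0)
    (hEout : ∀ j : ℤ, j < 0 ∨ (D : ℤ) < j → E j = 0)
    (hL : L = ∑ k ∈ Icc (1 : ℤ) D, E (k - 1) * A * E k) (j : ℤ) :
    E (j - 1) * L = E (j - 1) * A * E j := by
  simp only [hL, mul_sum, ← mul_assoc, hE, ite_mul, zero_mul, sub_left_inj, sum_ite_eq]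
  rw [ite_eq_left_iff]
  exact fun hj => (block_eq_zero_of_notMem hEout A (by simp only [mem_Icc] at hj ⊢; omega)).symm

theorem raise_mul_eq_block (hE : ∀ i j : ℤ, E i * E j = if i = j then E i else 0)
    (hEout : ∀ j : ℤ, j < 0 ∨ (D : ℤ) < j → E j = 0)
    (hR : R = ∑ k ∈ Icc (0 : ℤ) (D - 1), E (k + 1) * A * E k) (j : ℤ) :
    R * E j = E (j + 1) * A * E j := by
  simp only [hR, sum_mul, mul_assoc, hE, mul_ite, mul_zero, sum_ite_eq']
  rw [← mul_assoc, ite_eq_left_iff]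
  exact fun hj => (block_eq_zero_of_notMem hEout A (by simp only [mem_Icc] at hj ⊢; omega)).symm

theorem mul_raise_eq_block (hE : ∀ i j : ℤ, E i * E j = if i = j then E i else 0)
    (hEout : ∀ j : ℤ, j < 0 ∨ (D : ℤ) < j → E j = 0)
    (hR : R = ∑ k ∈ Icc (0 : ℤ) (D - 1), E (k + 1) * A * E k) (j : ℤ) :
    E (j + 1) * R = E (j + 1) * A * E j := by
  simp only [hR, mul_sum, ← mul_assoc, hE, ite_mul, zero_mul, add_left_inj, sum_ite_eq]
  rw [ite_eq_left_iff]
  exact fun hj => (block_eq_zero_of_notMem hEout A (by simp only [mem_Icc] at hj ⊢; omega)).symm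

theorem mul_eq_add_adjacent_blocks (hEout : ∀ j : ℤ, j < 0 ∨ (D : ℤ) < j → E j = 0)
    (hEsum : ∑ j ∈ Icc (0 : ℤ) D, E j = 1) (hA : ∀ i h : ℤ, |i - h| ≠ 1 → E i * A * E h = 0)
    (j : ℤ) : A * E j = E (j - 1) * A * E j + E (j + 1) * A * E j := by
  calc A * E j = (∑ a ∈ Icc (0 : ℤ) D, E a) * A * E j := by rw [hEsum, one_mul]
    _ = ∑ a ∈ Icc (0 : ℤ) D, E a * A * E j := by rw [sum_mul, sum_mul]
    _ = _ := by
      refine sum_eq_add (j - 1) (j + 1) (by omega) (fun a _ ha => hA a j ?_)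
        (fun h => block_eq_zero_of_notMem hEout A (.inl h))
        (fun h => block_eq_zero_of_notMem hEout A (.inl h))
      rw [Int.abs_eq_natAbs]; omega

theorem eq_lower_add_raise (hE : ∀ i j : ℤ, E i * E j = if i = j then E i else 0)
    (hEout : ∀ j : ℤ, j < 0 ∨ (D : ℤ) < j → E j = 0)
    (hEsum : ∑ j ∈ Icc (0 : ℤ) D, E j = 1) (hA : ∀ i h : ℤ, |i - h| ≠ 1 → E i * A * E h = 0)
    (hL : L = ∑ k ∈ Icc (1 : ℤ) D, E (k - 1) * A * E k)
    (hR : R = ∑ k ∈ Icc (0 : ℤ) (D - 1), E (k + 1) * A * E k) : A = L + R := by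
  calc A = ∑ j ∈ Icc (0 : ℤ) D, A * E j := by rw [← mul_sum, hEsum, mul_one]
    _ = ∑ j ∈ Icc (0 : ℤ) D, (L + R) * E j := by
      refine sum_congr rfl fun j _ => ?_
      rw [mul_eq_add_adjacent_blocks hEout hEsum hA, add_mul,
        lower_mul_eq_block hE hEout hL, raise_mul_eq_block hE hEout hR]
    _ = L + R := by rw [← mul_sum, hEsum, mul_one]

end Blocks

theorem sum_smul_mul_orthogonal {M : Type*} [Ring M] [Algebra ℝ M] {E : ℤ → M} {D : ℕ}
    (hE : ∀ i j : ℤ, E i * E j = if i = j then E i else 0)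
    (hEout : ∀ j : ℤ, j < 0 ∨ (D : ℤ) < j → E j = 0) (θ : ℤ → ℝ) (j : ℤ) :
    (∑ k ∈ Icc (0 : ℤ) D, θ k • E k) * E j = θ j • E j := by
  simp only [sum_mul, smul_mul_assoc, hE, smul_ite, smul_zero, sum_ite_eq']
  rw [ite_eq_left_iff]
  intro hj
  rw [hEout j (by simp only [mem_Icc] at hj; omega), smul_zero]

section Sandwich
variable {M : Type*} [Ring M] [Algebra ℝ M] {E : ℤ → M} {A L R As : M} {θ : ℤ → ℝ}

theorem sandwich_commutator_eq (hE : ∀ i j : ℤ, E i * E j = if i = j then E i else 0)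
    (hA : A = L + R) (hL : ∀ j, L * E j = E (j - 1) * L) (hR : ∀ j, R * E j = E (j + 1) * R)
    (hAs : ∀ j, As * E j = θ j • E j) (β ϱ : ℝ) (i : ℤ) :
    E (i - 1) * (A * (A ^ 2 * As - β • (A * As * A) + As * A ^ 2 - ϱ • As)
        - (A ^ 2 * As - β • (A * As * A) + As * A ^ 2 - ϱ • As) * A) * E i =
      (θ i - θ (i - 1) + (β + 1) * (θ (i - 2) - θ (i - 1))) • (R * L ^ 2 * E i)
      + ((β + 2) * (θ i - θ (i - 1))) • (L * R * L * E i)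
      + (θ i - θ (i - 1) + (β + 1) * (θ i - θ (i + 1))) • (L ^ 2 * R * E i)
      - (ϱ * (θ i - θ (i - 1))) • (L * E i) := by
  have hL' : ∀ j W, L * (E j * W) = E (j - 1) * (L * W) := fun j W => by
    rw [← mul_assoc, hL, mul_assoc]
  have hR' : ∀ j W, R * (E j * W) = E (j + 1) * (R * W) := fun j W => by
    rw [← mul_assoc, hR, mul_assoc]
  have hAs' : ∀ j W, As * (E j * W) = θ j • (E j * W) := fun j W => by
    rw [← mul_assoc, hAs, smul_mul_assoc]
  have hE' : ∀ a b W, E a * (E b * W) = if a = b then E a * W else 0 := fun a b W => by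
    rw [← mul_assoc, hE]; split_ifs <;> simp
  subst hA
  -- push `E i` to the far left of every word; `E (i - 1)` then keeps the words of degree `-1`
  simp only [pow_two, mul_add, add_mul, mul_sub, sub_mul, mul_smul_comm, smul_mul_assoc,
    mul_assoc, hL, hR, hAs, hL', hR', hAs', hE', smul_add]
  simp (disch := omega) only [if_neg, if_true, sub_add_cancel, add_sub_cancel_right, smul_zero,
    add_zero, zero_add, sub_zero]
  simp only [sub_sub, one_add_one_eq_two]
  module

end Sandwich

theorem stmt_14_general {X : Type*} [Fintype X] [DecidableEq X]
    (D : ℕ)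
    (E : ℤ → Matrix X X ℝ)
    (hEout : ∀ j : ℤ, j < 0 ∨ (D : ℤ) < j → E j = 0)
    (hEsum : ∑ j ∈ Finset.Icc (0 : ℤ) D, E j = 1)
    (hEorth : ∀ i j : ℤ, E i * E j = if i = j then E i else 0)
    (A : Matrix X X ℝ)
    (hA : ∀ i h : ℤ, |i - h| ≠ 1 → E i * A * E h = 0)
    (L R : Matrix X X ℝ)
    (hL : L = ∑ i ∈ Finset.Icc (1 : ℤ) D, E (i - 1) * A * E i)
    (hR : R = ∑ i ∈ Finset.Icc (0 : ℤ) (D - 1), E (i + 1) * A * E i)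
    (θs : ℤ → ℝ) (As : Matrix X X ℝ)
    (hAs : As = ∑ i ∈ Finset.Icc (0 : ℤ) D, θs i • E i)
    (β ϱ : ℝ)
    (hdist : ∀ i j : ℤ, 0 ≤ i → i ≤ D → 0 ≤ j → j ≤ D → i ≠ j → θs i ≠ θs j)
    (hrel : A * (A ^ 2 * As - β • (A * As * A) + As * A ^ 2 - ϱ • As)
          = (A ^ 2 * As - β • (A * As * A) + As * A ^ 2 - ϱ • As) * A) :
    ∀ i : ℤ, 1 ≤ i → i ≤ D →
      (((θs i - θs (i - 1) + (β + 1) * (θs (i - 2) - θs (i - 1))) / (θs i - θs (i - 1))) •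
          (R * L ^ 2) +
        (β + 2) • (L * R * L) +
        ((θs i - θs (i - 1) + (β + 1) * (θs i - θs (i + 1))) / (θs i - θs (i - 1))) •
          (L ^ 2 * R)) * E i = (ϱ • L) * E i := by
  intro i hi1 hiD
  have hd : θs i - θs (i - 1) ≠ 0 :=
    sub_ne_zero.mpr (hdist i (i - 1) (by omega) hiD (by omega) (by omega) (by omega))
  have key := sandwich_commutator_eq hEorth (eq_lower_add_raise hEorth hEout hEsum hA hL hR)
    (fun j => (lower_mul_eq_block hEorth hEout hL j).trans (mul_lower_eq_block hEorth hEout hL j).symm)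
    (fun j => (raise_mul_eq_block hEorth hEout hR j).trans (mul_raise_eq_block hEorth hEout hR j).symm)
    (fun j => hAs ▸ sum_smul_mul_orthogonal hEorth hEout θs j) β ϱ i
  rw [hrel, sub_self, mul_zero, zero_mul] at key
  rw [← smul_right_inj hd]
  simp only [add_mul, smul_mul_assoc, smul_add, smul_smul, mul_div_cancel₀ _ hd]
  linear_combination (norm := module) -key

theorem stmt_14 {X : Type*} [Fintype X] [DecidableEq X]
    (D : ℕ) (hD : 3 ≤ D)
    (E : ℤ → Matrix X X ℝ)
    (hEout : ∀ j : ℤ, j < 0 ∨ (D : ℤ) < j → E j = 0)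
    (hEdiag : ∀ j, (E j).IsDiag)
    (hE01 : ∀ j (x : X), E j x x = 0 ∨ E j x x = 1)
    (hEsum : ∑ j ∈ Finset.Icc (0 : ℤ) D, E j = 1)
    (hEorth : ∀ i j : ℤ, E i * E j = if i = j then E i else 0)
    (A : Matrix X X ℝ)
    (hA : ∀ i h : ℤ, |i - h| ≠ 1 → E i * A * E h = 0)
    (L R : Matrix X X ℝ)
    (hL : L = ∑ i ∈ Finset.Icc (1 : ℤ) D, E (i - 1) * A * E i)
    (hR : R = ∑ i ∈ Finset.Icc (0 : ℤ) (D - 1), E (i + 1) * A * E i)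
    (θs : ℤ → ℝ) (As : Matrix X X ℝ)
    (hAs : As = ∑ i ∈ Finset.Icc (0 : ℤ) D, θs i • E i)
    (β ϱ : ℝ)
    (hdist : ∀ i j : ℤ, 0 ≤ i → i ≤ D → 0 ≤ j → j ≤ D → i ≠ j → θs i ≠ θs j)
    (hrel : A * (A ^ 2 * As - β • (A * As * A) + As * A ^ 2 - ϱ • As)
          = (A ^ 2 * As - β • (A * As * A) + As * A ^ 2 - ϱ • As) * A) :
    ∀ i : ℤ, 1 ≤ i → i ≤ D →
      (((θs i - θs (i - 1) + (β + 1) * (θs (i - 2) - θs (i - 1))) / (θs i - θs (i - 1))) •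
          (R * L ^ 2) +
        (β + 2) • (L * R * L) +
        ((θs i - θs (i - 1) + (β + 1) * (θs i - θs (i + 1))) / (θs i - θs (i - 1))) •
          (L ^ 2 * R)) * E i = (ϱ • L) * E i :=
  stmt_14_general D E hEout hEsum hEorth A hA L R hL hR θs As hAs β ϱ hdist hrel
end

section
/- Let k ≥ 3 and define θ*₀ = k, θ*₁ = 1, θ*₂ = −1, θ*₃ = −k, and set β = k − 1. Then the 3×3 tridiagonal matrix U with all diagonal entries 1, subdiagonal entries e₂^- = (θ*₂ − θ*₁ + (β+1)(θ*₀ − θ*₁))/((β+2)(θ*₂ − θ*₁)) = (2−k)/2 and e₃^- = (θ*₃ − θ*₂ + (β+1)(θ*₁ − θ*₂))/((β+2)(θ*₃ − θ*₂)) = 1/(1−k), and superdiagonal entries e₁^+ = 1/(1−k), e₂^+ = (2−k)/2, has det(U) = 1/(k−1) ≠ 0; moreover every principal 2×2 contiguous submatrix has determinant k/(2(k−1)) ≠ 0, and all off-diagonal entries e₂^-, e₃^-, e₁^+, e₂^+ are nonzero. -/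
theorem stmt_18 (k : ℝ) (hk : 3 ≤ k)
    (θs : ℕ → ℝ) (h0 : θs 0 = k) (h1 : θs 1 = 1) (h2 : θs 2 = -1) (h3 : θs 3 = -k)
    (β : ℝ) (hβ : β = k - 1)
    (e2m e3m e1p e2p : ℝ)
    (he2m : e2m = (θs 2 - θs 1 + (β + 1) * (θs 0 - θs 1)) / ((β + 2) * (θs 2 - θs 1)))
    (he3m : e3m = (θs 3 - θs 2 + (β + 1) * (θs 1 - θs 2)) / ((β + 2) * (θs 3 - θs 2)))
    (he1p : e1p = 1 / (1 - k)) (he2p : e2p = (2 - k) / 2)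
    (U : Matrix (Fin 3) (Fin 3) ℝ)
    (hU : U = !![1, e1p, 0; e2m, 1, e2p; 0, e3m, 1]) :
    e2m = (2 - k) / 2 ∧ e3m = 1 / (1 - k) ∧
    U.det = 1 / (k - 1) ∧ (1 : ℝ) / (k - 1) ≠ 0 ∧
    (!![(1 : ℝ), e1p; e2m, 1]).det = k / (2 * (k - 1)) ∧
    (!![(1 : ℝ), e2p; e3m, 1]).det = k / (2 * (k - 1)) ∧
    k / (2 * (k - 1)) ≠ 0 ∧
    e2m ≠ 0 ∧ e3m ≠ 0 ∧ e1p ≠ 0 ∧ e2p ≠ 0 := by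
  have hk1 : k - 1 ≠ 0 := by linarith
  have hk1' : (1 : ℝ) - k ≠ 0 := by linarith
  have hk2 : k - 2 ≠ 0 := by linarith
  have hkne : k ≠ 0 := by linarith
  have hkp1 : k + 1 ≠ 0 := by linarith
  rw [h0, h1, h2] at he2m
  rw [h1, h2, h3] at he3m
  subst hβ he1p he2p hU
  have hm : e2m = (2 - k) / 2 := by
    rw [he2m, div_eq_div_iff (by intro h; apply hkp1; nlinarith) two_ne_zero]
    ring
  have h3m : e3m = 1 / (1 - k) := by
    rw [he3m]; rw [div_eq_div_iff (by intro h; apply hkp1; nlinarith) hk1']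
    ring
  subst hm h3m
  refine ⟨rfl, rfl, ?_, ?_, ?_, ?_, ?_, ?_, ?_, ?_, ?_⟩
  · simp [Matrix.det_fin_three]; field_simp; ring
  · simp [hk1]
  · simp [Matrix.det_fin_two]; field_simp; ring
  · simp [Matrix.det_fin_two]; field_simp; ring
  · exact div_ne_zero hkne (by simpa using mul_ne_zero two_ne_zero hk1)
  · intro h; apply hk2; have := div_eq_zero_iff.mp h; rcases this with h'|h' <;> linarith
  · simp [hk1']
  · simp [hk1']
  · intro h; apply hk2; have := div_eq_zero_iff.mp h; rcases this with h'|h' <;> linarith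
end

section
/- Let D ≥ 3, q ∈ ℝ with |q| > 1, and s* ∈ ℝ with s* q^j ≠ 1 for 2 ≤ j ≤ 2D+1 and s* q ≠ 1. For 1 ≤ r ≤ p ≤ D, the determinant of the tridiagonal (p−r+1)×(p−r+1) matrix with diagonal entries 1, subdiagonal entries e_i^- = −q²(1 − s* q^{2i−3})/((q+1)(1 − s* q^{2i})) (r+1 ≤ i ≤ p) and superdiagonal entries e_i^+ = −(1 − s* q^{2i+3})/(q(q+1)(1 − s* q^{2i})) (r ≤ i ≤ p−1) equals (q^{p−r+2} − 1)(1 − s* q^{p+r}) · ∏_{j=0}^{p−r−1}(1 − s* q^{2r+1+2j}) / ((q+1)^{p−r+1}(q − 1) · ∏_{j=0}^{p−r}(1 − s* q^{2r+2j})), and in particular is nonzero. -/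
/-!
Expanding a tridiagonal determinant along its last row gives the three-term recurrence
`Δₙ₊₂ = aₙ₊₁ Δₙ₊₁ - bₙ₊₁ cₙ Δₙ` for its leading principal minors. The closed form satisfies the
same recurrence and has the same two initial values; each of these is a rational-function identity
in `q`, `qⁿ` and `s q²ʳ` once the common products are cancelled. Nonvanishing is read off the
factors of the closed form, `|q| > 1` ruling out `q ^ (p - r + 2) = 1`.
-/

open Matrix Finset

section Tridiagonal

variable {R : Type*} [CommRing R] (a b c : ℕ → R)

def tridiagonal (n : ℕ) : Matrix (Fin n) (Fin n) R :=
  Matrix.of fun i j =>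
    if (i : ℕ) = j then a i else if (i : ℕ) = j + 1 then b i else if (j : ℕ) = i + 1 then c i else 0

variable {a b c} in
theorem tridiagonal_apply_eq_zero {n : ℕ} {i j : Fin n} (hij : (i : ℕ) + 1 < j ∨ (j : ℕ) + 1 < i) :
    tridiagonal a b c n i j = 0 := by
  simp only [tridiagonal, of_apply]
  split_ifs <;> first | rfl | omega

theorem tridiagonal_submatrix_castSucc (n : ℕ) :
    (tridiagonal a b c (n + 1)).submatrix Fin.castSucc Fin.castSucc = tridiagonal a b c n := by
  ext i j
  simp [tridiagonal]

theorem det_tridiagonal_zero : (tridiagonal a b c 0).det = 1 :=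
  det_isEmpty

theorem det_tridiagonal_one : (tridiagonal a b c 1).det = a 0 := by
  simp [tridiagonal]

theorem det_tridiagonal_add_two (n : ℕ) :
    (tridiagonal a b c (n + 2)).det =
      a (n + 1) * (tridiagonal a b c (n + 1)).det -
        b (n + 1) * c n * (tridiagonal a b c n).det := by
  set A := tridiagonal a b c (n + 2)
  -- the minor of the entry `b (n + 1)`; its last column has the single nonzero entry `c n`
  have hB : (A.submatrix Fin.castSucc (Fin.castSucc (Fin.last n)).succAbove).det =
      c n * (tridiagonal a b c n).det := by
    set B := A.submatrix Fin.castSucc (Fin.castSucc (Fin.last n)).succAbove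
    have hminor : B.submatrix Fin.castSucc Fin.castSucc = tridiagonal a b c n := by
      ext i j
      simp [B, A, Fin.succAbove_castSucc_of_lt _ _ (Fin.castSucc_lt_last j),
        ← tridiagonal_submatrix_castSucc a b c n, ← tridiagonal_submatrix_castSucc a b c (n + 1)]
    have hcorner : B (Fin.last n) (Fin.last n) = c n := by
      simp [B, A, tridiagonal, show n ≠ n + 1 + 1 by omega]
    rw [det_succ_column B (Fin.last n), Fin.sum_univ_castSucc, Finset.sum_eq_zero, zero_add,
      Fin.succAbove_last, hminor, hcorner]
    · simp [← two_mul]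
    · intro i _
      rw [show B _ _ = 0 from tridiagonal_apply_eq_zero (by simp)]
      ring
  have hlast : A (Fin.last (n + 1)) (Fin.last (n + 1)) = a (n + 1) := by simp [A, tridiagonal]
  have hsub : A (Fin.last (n + 1)) (Fin.castSucc (Fin.last n)) = b (n + 1) := by
    simp [A, tridiagonal]
  rw [det_succ_row A (Fin.last (n + 1)), Fin.sum_univ_castSucc, Fin.sum_univ_castSucc,
    Finset.sum_eq_zero, zero_add, Fin.succAbove_last, hB, tridiagonal_submatrix_castSucc, hlast,
    hsub]
  · simp only [Fin.val_last, Fin.val_castSucc, odd_add_one_self, Odd.neg_one_pow, Even.add_self,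
      Even.neg_pow, one_pow]
    ring
  · intro j _
    rw [show A _ _ = 0 from tridiagonal_apply_eq_zero (by simp)]
    ring

end Tridiagonal

section MinorFormula

variable {K : Type*} [Field K] (q s : K)

-- `2 * i - 3` is truncated subtraction; it is only ever evaluated at `i ≥ 2`.
def eMinus (i : ℕ) : K :=
  -(q ^ 2 * (1 - s * q ^ (2 * i - 3))) / ((q + 1) * (1 - s * q ^ (2 * i)))

def ePlus (i : ℕ) : K :=
  -(1 - s * q ^ (2 * i + 3)) / (q * (q + 1) * (1 - s * q ^ (2 * i)))

-- the value of the minor on the rows and columns `r, …, r + n`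
def minorFormula (r n : ℕ) : K :=
  (q ^ (n + 2) - 1) * (1 - s * q ^ (2 * r + n)) *
      (∏ j ∈ range n, (1 - s * q ^ (2 * r + 1 + 2 * j))) /
    ((q + 1) ^ (n + 1) * (q - 1) * ∏ j ∈ range (n + 1), (1 - s * q ^ (2 * r + 2 * j)))

variable {q s}

theorem minorFormula_zero {r : ℕ} (hq₁ : q + 1 ≠ 0) (hq₂ : q - 1 ≠ 0)
    (hs : 1 - s * q ^ (2 * r) ≠ 0) : minorFormula q s r 0 = 1 := by
  rw [minorFormula]
  simp only [zero_add, prod_range_one, prod_range_zero, mul_zero, add_zero]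
  field_simp
  ring

theorem minorFormula_one {r : ℕ} (hr : 1 ≤ r) (hq₁ : q + 1 ≠ 0) (hq₂ : q - 1 ≠ 0)
    (hs₀ : 1 - s * q ^ (2 * r) ≠ 0) (hs₁ : 1 - s * q ^ (2 * r + 2) ≠ 0) :
    minorFormula q s r 1 = 1 - eMinus q s (r + 1) * ePlus q s r := by
  obtain ⟨r, rfl⟩ := Nat.exists_eq_add_of_le' hr
  rw [minorFormula, eMinus, ePlus, show 2 * (r + 1 + 1) - 3 = 2 * r + 1 by omega,
    show 2 * (r + 1 + 1) = 2 * (r + 1) + 2 by ring]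
  simp only [prod_range_succ, prod_range_zero, one_mul, mul_zero, add_zero, mul_one]
  field_simp
  ring

theorem minorFormula_add_two {r n : ℕ} (hq₁ : q + 1 ≠ 0) (hq₂ : q - 1 ≠ 0)
    (hs : ∀ j ≤ n + 2, 1 - s * q ^ (2 * r + 2 * j) ≠ 0) :
    minorFormula q s r (n + 2) = minorFormula q s r (n + 1) -
      eMinus q s (r + n + 2) * ePlus q s (r + n + 1) * minorFormula q s r n := by
  rw [minorFormula, minorFormula, minorFormula, eMinus, ePlus,
    show 2 * (r + n + 2) - 3 = 2 * r + 1 + 2 * n by omega]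
  simp only [prod_range_succ]
  rw [show 2 * (r + n + 2) = 2 * r + 2 * (n + 2) by ring,
    show 2 * (r + n + 1) = 2 * r + 2 * (n + 1) by ring]
  have h₀ : ∏ j ∈ range n, (1 - s * q ^ (2 * r + 2 * j)) ≠ 0 :=
    prod_ne_zero_iff.2 fun j hj => hs j (by simp only [mem_range] at hj; omega)
  have h₁ := hs n (by omega)
  have h₂ := hs (n + 1) (by omega)
  have h₃ := hs (n + 2) le_rfl
  generalize ∏ j ∈ range n, (1 - s * q ^ (2 * r + 2 * j)) = P₀ at *
  generalize ∏ j ∈ range n, (1 - s * q ^ (2 * r + 1 + 2 * j)) = P₁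
  field_simp
  ring

theorem det_tridiagonal_eq_minorFormula {r : ℕ} (hr : 1 ≤ r) (hq₁ : q + 1 ≠ 0)
    (hq₂ : q - 1 ≠ 0) :
    ∀ n, (∀ j ≤ n, 1 - s * q ^ (2 * r + 2 * j) ≠ 0) →
      (tridiagonal (fun _ => 1) (fun i => eMinus q s (r + i)) (fun i => ePlus q s (r + i))
        (n + 1)).det = minorFormula q s r n := by
  refine Nat.twoStepInduction ?_ ?_ fun n ih₀ ih₁ hs => ?_
  · intro hs
    rw [det_tridiagonal_one, minorFormula_zero hq₁ hq₂ (by simpa using hs 0 le_rfl)]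
  · intro hs
    rw [det_tridiagonal_add_two, det_tridiagonal_one, det_tridiagonal_zero,
      minorFormula_one hr hq₁ hq₂ (by simpa using hs 0 (by omega)) (by simpa using hs 1 le_rfl)]
    simp
  · rw [det_tridiagonal_add_two, ih₁ fun j hj => hs j (by omega), ih₀ fun j hj => hs j (by omega),
      minorFormula_add_two hq₁ hq₂ hs]
    simp only [one_mul, add_assoc]

theorem minorFormula_ne_zero {r n : ℕ} (hq : q ^ (n + 2) ≠ 1) (hq₁ : q + 1 ≠ 0) (hq₂ : q - 1 ≠ 0)
    (hs : ∀ k ∈ Icc (2 * r) (2 * r + 2 * n), 1 - s * q ^ k ≠ 0) : minorFormula q s r n ≠ 0 := by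
  have hodd : ∏ j ∈ range n, (1 - s * q ^ (2 * r + 1 + 2 * j)) ≠ 0 :=
    prod_ne_zero_iff.2 fun j hj => hs _ (mem_Icc.2 (by rw [mem_range] at hj; omega))
  have heven : ∏ j ∈ range (n + 1), (1 - s * q ^ (2 * r + 2 * j)) ≠ 0 :=
    prod_ne_zero_iff.2 fun j hj => hs _ (mem_Icc.2 (by rw [mem_range] at hj; omega))
  exact div_ne_zero
    (mul_ne_zero (mul_ne_zero (sub_ne_zero.2 hq) (hs _ (mem_Icc.2 (by omega)))) hodd)
    (mul_ne_zero (mul_ne_zero (pow_ne_zero _ hq₁) hq₂) heven)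

end MinorFormula

theorem pow_ne_one_of_one_lt_abs {q : ℝ} (hq : 1 < |q|) {m : ℕ} (hm : m ≠ 0) : q ^ m ≠ 1 :=
  fun h => by simpa [← abs_pow, h] using one_lt_pow₀ hq hm

theorem stmt_19_general (D : ℕ) (q s : ℝ) (hq : 1 < |q|)
    (hs : ∀ j : ℕ, 2 ≤ j → j ≤ 2 * D + 1 → s * q ^ j ≠ 1)
    (em ep : ℕ → ℝ)
    (hem : ∀ i, em i = -(q ^ 2 * (1 - s * q ^ (2 * i - 3))) / ((q + 1) * (1 - s * q ^ (2 * i))))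
    (hep : ∀ i, ep i = -(1 - s * q ^ (2 * i + 3)) / (q * (q + 1) * (1 - s * q ^ (2 * i))))
    (r p : ℕ) (hr : 1 ≤ r) (hrp : r ≤ p) (hp : p ≤ D)
    (M : Matrix (Fin (p - r + 1)) (Fin (p - r + 1)) ℝ)
    (hM : ∀ i j : Fin (p - r + 1),
      M i j = if (i : ℕ) = j then 1
        else if (i : ℕ) = (j : ℕ) + 1 then em (r + i)
        else if (j : ℕ) = (i : ℕ) + 1 then ep (r + i)
        else 0) :
    M.det = (q ^ (p - r + 2) - 1) * (1 - s * q ^ (p + r)) *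
        (∏ j ∈ Finset.range (p - r), (1 - s * q ^ (2 * r + 1 + 2 * j))) /
      ((q + 1) ^ (p - r + 1) * (q - 1) *
        ∏ j ∈ Finset.range (p - r + 1), (1 - s * q ^ (2 * r + 2 * j))) ∧
    M.det ≠ 0 := by
  obtain rfl : em = eMinus q s := funext hem
  obtain rfl : ep = ePlus q s := funext hep
  have hq₁ : q + 1 ≠ 0 := fun h => by simp [eq_neg_of_add_eq_zero_left h] at hq
  have hq₂ : q - 1 ≠ 0 := sub_ne_zero.2 (by simpa using pow_ne_one_of_one_lt_abs hq one_ne_zero)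
  have hs' : ∀ k ∈ Icc (2 * r) (2 * r + 2 * (p - r)), 1 - s * q ^ k ≠ 0 := fun k hk => by
    rw [mem_Icc] at hk
    exact sub_ne_zero.2 (hs k (by omega) (by omega)).symm
  have hM' : M = tridiagonal (fun _ => 1) (fun i => eMinus q s (r + i))
      (fun i => ePlus q s (r + i)) (p - r + 1) := by
    ext i j
    exact hM i j
  have hdet : M.det = minorFormula q s r (p - r) := by
    rw [hM']
    exact det_tridiagonal_eq_minorFormula hr hq₁ hq₂ _ fun j hj => hs' _ (mem_Icc.2 (by omega))
  refine ⟨?_, hdet ▸ minorFormula_ne_zero (pow_ne_one_of_one_lt_abs hq (by omega)) hq₁ hq₂ hs'⟩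
  rw [hdet, minorFormula, show 2 * r + (p - r) = p + r by omega]

theorem stmt_19 (D : ℕ) (hD : 3 ≤ D) (q s : ℝ) (hq : 1 < |q|)
    (hs : ∀ j : ℕ, 2 ≤ j → j ≤ 2 * D + 1 → s * q ^ j ≠ 1)
    (hsq : s * q ≠ 1)
    (em ep : ℕ → ℝ)
    (hem : ∀ i, em i = -(q ^ 2 * (1 - s * q ^ (2 * i - 3))) / ((q + 1) * (1 - s * q ^ (2 * i))))
    (hep : ∀ i, ep i = -(1 - s * q ^ (2 * i + 3)) / (q * (q + 1) * (1 - s * q ^ (2 * i))))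
    (r p : ℕ) (hr : 1 ≤ r) (hrp : r ≤ p) (hp : p ≤ D)
    (M : Matrix (Fin (p - r + 1)) (Fin (p - r + 1)) ℝ)
    (hM : ∀ i j : Fin (p - r + 1),
      M i j = if (i : ℕ) = j then 1
        else if (i : ℕ) = (j : ℕ) + 1 then em (r + i)
        else if (j : ℕ) = (i : ℕ) + 1 then ep (r + i)
        else 0) :
    M.det = (q ^ (p - r + 2) - 1) * (1 - s * q ^ (p + r)) *
        (∏ j ∈ Finset.range (p - r), (1 - s * q ^ (2 * r + 1 + 2 * j))) /
      ((q + 1) ^ (p - r + 1) * (q - 1) *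
        ∏ j ∈ Finset.range (p - r + 1), (1 - s * q ^ (2 * r + 2 * j))) ∧
    M.det ≠ 0 :=
  stmt_19_general D q s hq hs em ep hem hep r p hr hrp hp M hM
end
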